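/- Fix a natural number k. Then lim_{d→∞} ∑_{i=0}^{d} (k + i) · 2^{−i} · ∏_{j=i+1}^{d} (1 − 2^{−j}) = k + c₀, where c₀ = ∑_{i=1}^{∞} 1/(2^i − 1) is the Erdős–Borwein constant. (With d = n − k, the sum is the expected value E[M_n] of the number M_n of received symbols needed to decode a random binary linear (n,k) code, whose distribution is P(M_n = k+i) = 2^{−i} ∏_{j=i+1}^{d} (1 − 2^{−j}) for 0 ≤ i ≤ d.) -/

import Mathlib

/-!
Write `F_d(i) = ∏_{j=i+1}^{d} (1 - q^j)` for `0 ≤ q < 1` (the theorem is the case `q = 1/2`).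
The weights `q^i F_d(i)`, `i ≤ d`, sum to `1`, and summation by parts turns their mean
`∑ i q^i F_d(i)` into `∑_{i<d} (1 - F_d(i))`. Reading the `i`-th term as `1 - F_{i+m}(i)` with
window length `m = d - i`, the terms increase with `m` and are dominated by `q^{i+1}/(1-q)`, so by
Tannery's theorem these antidiagonal sums have the same limit as the row sums
`H_m = ∑_i (1 - F_{i+m}(i))`. Splitting off the last factor of `F_{i+m+2}(i+1)` and the first of
`F_{i+m+1}(i)` gives `1 - F_{i+m+2}(i+1) = a (1 - F_{i+m+1}(i)) + (1 - a) (1 - F_{i+m+1}(i+1))`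
with `a = q^{m+1}`; summing over `i` yields `H_{m+1} = H_m + a/(1-a)`, so `H_m` are the partial
sums of `∑_m q^{m+1}/(1 - q^{m+1})`, which is `c₀` at `q = 1/2`.
-/

open Filter

/-- The Erdős–Borwein constant `c₀ = ∑_{i=1}^{∞} 1/(2^i − 1)`. -/
noncomputable def c₀ : ℝ := ∑' i : ℕ, 1 / ((2 : ℝ) ^ (i + 1) - 1)

open Finset Topology

theorem Finset.one_sub_sum_le_prod_one_sub {ι : Type*} (s : Finset ι) {f : ι → ℝ}
    (h0 : ∀ i ∈ s, 0 ≤ f i) (h1 : ∀ i ∈ s, f i ≤ 1) :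
    1 - ∑ i ∈ s, f i ≤ ∏ i ∈ s, (1 - f i) := by
  classical
  induction s using Finset.induction_on with
  | empty => simp
  | insert a s ha ih =>
    simp only [mem_insert, forall_eq_or_imp] at h0 h1
    rw [prod_insert ha, sum_insert ha]
    have hsum : 0 ≤ ∑ i ∈ s, f i := sum_nonneg h0.2
    nlinarith [ih h0.2 h1.2, mul_nonneg h0.1 hsum]

/-- Both the antidiagonal sums and the row sums converge to `∑' i, ⨆ m, u i m` by Tannery's
theorem. -/
theorem tendsto_sum_range_sub_of_monotone {u : ℕ → ℕ → ℝ} {b : ℕ → ℝ} {c : ℝ}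
    (hmono : ∀ i, Monotone (u i)) (hbound : ∀ i m, |u i m| ≤ b i) (hb : Summable b)
    (hlim : Tendsto (fun m => ∑' i, u i m) atTop (𝓝 c)) :
    Tendsto (fun d => ∑ i ∈ range d, u i (d - i)) atTop (𝓝 c) := by
  have hu : ∀ i, Tendsto (u i) atTop (𝓝 (⨆ m, u i m)) := fun i =>
    tendsto_atTop_ciSup (hmono i) ⟨b i, by
      rintro _ ⟨m, rfl⟩
      exact (le_abs_self _).trans (hbound i m)⟩
  have hc : c = ∑' i, ⨆ m, u i m :=
    tendsto_nhds_unique hlim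
      (tendsto_tsum_of_dominated_convergence hb hu (Eventually.of_forall fun m i => hbound i m))
  have hdiag : ∀ i, Tendsto (fun d => if i < d then u i (d - i) else 0) atTop
      (𝓝 (⨆ m, u i m)) := fun i =>
    ((hu i).comp (tendsto_sub_atTop_nat i)).congr' <| by
      filter_upwards [eventually_gt_atTop i] with d hd
      simp [hd]
  have hdiag_bound : ∀ d i, ‖if i < d then u i (d - i) else 0‖ ≤ b i := fun d i => by
    split_ifs
    · exact hbound i _
    · simpa using (abs_nonneg _).trans (hbound i 0)
  rw [hc]
  refine (tendsto_tsum_of_dominated_convergence hb hdiag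
    (Eventually.of_forall hdiag_bound)).congr fun d => ?_
  rw [tsum_eq_sum (s := range d) fun i hi => if_neg (by simpa using hi)]
  exact sum_congr rfl fun i hi => if_pos (mem_range.1 hi)

/-- For `q = 1/2` and `d = n - k`, `q ^ i * tailProd q i d` is the probability that decoding a
random binary linear `(n, k)` code needs `k + i` received symbols. -/
noncomputable def tailProd (q : ℝ) (i d : ℕ) : ℝ := ∏ j ∈ Icc (i + 1) d, (1 - q ^ j)

noncomputable def windowSum (q : ℝ) (m : ℕ) : ℝ := ∑' i, (1 - tailProd q i (i + m))

variable {q : ℝ}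

theorem tailProd_of_le {i d : ℕ} (h : d ≤ i) : tailProd q i d = 1 := by
  rw [tailProd, Icc_eq_empty (by omega), prod_empty]

theorem tailProd_succ_right {i d : ℕ} (h : i ≤ d) :
    tailProd q i (d + 1) = tailProd q i d * (1 - q ^ (d + 1)) :=
  prod_Icc_succ_top (by omega) _

theorem tailProd_eq_mul_tailProd_succ {i d : ℕ} (h : i < d) :
    tailProd q i d = (1 - q ^ (i + 1)) * tailProd q (i + 1) d := by
  rw [tailProd, ← insert_Icc_add_one_left_eq_Icc (by omega : i + 1 ≤ d),
    prod_insert (by simp), tailProd]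

theorem tailProd_add_succ_succ (i m : ℕ) :
    tailProd q (i + 1) (i + 1 + (m + 1)) =
      q ^ (m + 1) * tailProd q i (i + (m + 1)) +
        (1 - q ^ (m + 1)) * tailProd q (i + 1) (i + 1 + m) := by
  rw [← add_assoc, tailProd_succ_right (by omega),
    tailProd_eq_mul_tailProd_succ (d := i + (m + 1)) (by omega),
    show i + (m + 1) = i + 1 + m by omega]
  ring

theorem sum_mul_tailProd_succ_right (g : ℕ → ℝ) (d : ℕ) :
    ∑ i ∈ range (d + 1), g i * tailProd q i (d + 1) =
      (∑ i ∈ range (d + 1), g i * tailProd q i d) * (1 - q ^ (d + 1)) := by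
  rw [sum_mul]
  refine sum_congr rfl fun i hi => ?_
  rw [tailProd_succ_right (Nat.lt_succ_iff.1 (mem_range.1 hi)), mul_assoc]

theorem sum_pow_mul_tailProd (d : ℕ) : ∑ i ∈ range (d + 1), q ^ i * tailProd q i d = 1 := by
  induction d with
  | zero => simp [tailProd_of_le]
  | succ d ih =>
    rw [sum_range_succ, sum_mul_tailProd_succ_right, ih, tailProd_of_le le_rfl]
    ring

theorem sum_mul_pow_mul_tailProd (d : ℕ) :
    ∑ i ∈ range (d + 1), i * q ^ i * tailProd q i d = ∑ i ∈ range d, (1 - tailProd q i d) := by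
  induction d with
  | zero => simp
  | succ d ih =>
    have hsucc : ∑ i ∈ range (d + 1), (1 - tailProd q i (d + 1)) =
        ∑ i ∈ range (d + 1), ((1 - tailProd q i d) * (1 - q ^ (d + 1)) + q ^ (d + 1)) := by
      refine sum_congr rfl fun i hi => ?_
      rw [tailProd_succ_right (Nat.lt_succ_iff.1 (mem_range.1 hi))]
      ring
    rw [sum_range_succ, sum_mul_tailProd_succ_right, ih, tailProd_of_le le_rfl, hsucc,
      sum_add_distrib, sum_const, card_range, nsmul_eq_mul, sum_range_succ, tailProd_of_le le_rfl,
      ← sum_mul]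
    push_cast
    ring

theorem tailProd_le_tailProd (hq0 : 0 ≤ q) (hq1 : q ≤ 1) {i d d' : ℕ} (h : d ≤ d') :
    tailProd q i d' ≤ tailProd q i d :=
  prod_le_prod_of_subset_of_le_one (Icc_subset_Icc_right h)
    (fun _ _ => sub_nonneg.2 (pow_le_one₀ hq0 hq1))
    (fun _ _ _ => sub_le_self _ (pow_nonneg hq0 _))

theorem tailProd_le_one (hq0 : 0 ≤ q) (hq1 : q ≤ 1) (i d : ℕ) : tailProd q i d ≤ 1 :=
  (tailProd_le_tailProd hq0 hq1 (Nat.zero_le d)).trans_eq (tailProd_of_le (Nat.zero_le i))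

section Convergence

variable (hq0 : 0 ≤ q) (hq1 : q < 1)
include hq0 hq1

theorem one_sub_tailProd_le (i d : ℕ) : 1 - tailProd q i d ≤ q ^ (i + 1) / (1 - q) :=
  calc 1 - tailProd q i d ≤ ∑ j ∈ Ico (i + 1) (d + 1), q ^ j := by
        rw [Ico_add_one_right_eq_Icc, sub_le_comm]
        exact one_sub_sum_le_prod_one_sub _ (fun j _ => pow_nonneg hq0 j)
          (fun j _ => pow_le_one₀ hq0 hq1.le)
    _ ≤ q ^ (i + 1) / (1 - q) := geom_sum_Ico_le_of_lt_one hq0 hq1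

theorem summable_pow_succ_div_one_sub : Summable fun i : ℕ => q ^ (i + 1) / (1 - q) := by
  simp only [pow_succ]
  exact ((summable_geometric_of_lt_one hq0 hq1).mul_right q).div_const _

theorem summable_one_sub_tailProd_add (m : ℕ) :
    Summable fun i => 1 - tailProd q i (i + m) :=
  (summable_pow_succ_div_one_sub hq0 hq1).of_nonneg_of_le
    (fun _ => sub_nonneg.2 (tailProd_le_one hq0 hq1.le ..))
    (fun i => one_sub_tailProd_le hq0 hq1 i _)

theorem windowSum_succ (m : ℕ) :
    windowSum q (m + 1) = windowSum q m + q ^ (m + 1) / (1 - q ^ (m + 1)) := by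
  set a := q ^ (m + 1)
  have ha : a < 1 := pow_lt_one₀ hq0 hq1 (by omega)
  have hsum := summable_one_sub_tailProd_add hq0 hq1
  have hzero : 1 - tailProd q 0 (0 + (m + 1)) = a + (1 - a) * (1 - tailProd q 0 (0 + m)) := by
    rw [zero_add, zero_add, tailProd_succ_right (Nat.zero_le m)]
    ring
  have hshift : ∑' i, (1 - tailProd q (i + 1) (i + 1 + (m + 1))) =
      a * windowSum q (m + 1) + (1 - a) * ∑' i, (1 - tailProd q (i + 1) (i + 1 + m)) := by
    have hstep : ∀ i, 1 - tailProd q (i + 1) (i + 1 + (m + 1)) =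
        a * (1 - tailProd q i (i + (m + 1))) + (1 - a) * (1 - tailProd q (i + 1) (i + 1 + m)) :=
      fun i => by rw [tailProd_add_succ_succ]; ring
    have hsum_shift : Summable fun i => 1 - tailProd q (i + 1) (i + 1 + m) :=
      (hsum m).comp_injective (add_left_injective 1)
    rw [tsum_congr hstep, ((hsum _).mul_left a).tsum_add (hsum_shift.mul_left _),
      tsum_mul_left, tsum_mul_left, windowSum]
  have hrec : windowSum q (m + 1) = a + a * windowSum q (m + 1) + (1 - a) * windowSum q m := by
    have h1 := (hsum (m + 1)).tsum_eq_zero_add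
    have h0 := (hsum m).tsum_eq_zero_add
    simp only [windowSum] at hshift ⊢
    linear_combination h1 + hshift + hzero - (1 - a) * h0
  have ha' : 1 - a ≠ 0 := by linarith
  field_simp
  linear_combination hrec

theorem windowSum_eq_sum_range (m : ℕ) :
    windowSum q m = ∑ n ∈ range m, q ^ (n + 1) / (1 - q ^ (n + 1)) := by
  induction m with
  | zero => simp [windowSum, tailProd_of_le]
  | succ m ih => rw [windowSum_succ hq0 hq1, ih, sum_range_succ]

theorem summable_pow_succ_div_one_sub_pow_succ :
    Summable fun n : ℕ => q ^ (n + 1) / (1 - q ^ (n + 1)) :=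
  (summable_pow_succ_div_one_sub hq0 hq1).of_nonneg_of_le
    (fun _ => div_nonneg (pow_nonneg hq0 _) (sub_nonneg.2 (pow_le_one₀ hq0 hq1.le)))
    (fun n => div_le_div_of_nonneg_left (pow_nonneg hq0 _) (sub_pos.2 hq1)
      (sub_le_sub_left (pow_le_of_le_one hq0 hq1.le n.succ_ne_zero) 1))

theorem tendsto_sum_mul_pow_mul_tailProd (k : ℝ) :
    Tendsto (fun d => ∑ i ∈ range (d + 1), (k + i) * q ^ i * tailProd q i d) atTop
      (𝓝 (k + ∑' n : ℕ, q ^ (n + 1) / (1 - q ^ (n + 1)))) := by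
  have hmean : ∀ d, ∑ i ∈ range (d + 1), (k + i) * q ^ i * tailProd q i d =
      k + ∑ i ∈ range d, (1 - tailProd q i (i + (d - i))) := fun d => by
    simp only [add_mul, sum_add_distrib, mul_assoc k, ← mul_sum, sum_pow_mul_tailProd,
      sum_mul_pow_mul_tailProd, mul_one]
    exact congrArg _ (sum_congr rfl fun i hi => by rw [Nat.add_sub_of_le (mem_range.1 hi).le])
  have hwindow : Tendsto (fun m => ∑' i, (1 - tailProd q i (i + m))) atTop
      (𝓝 (∑' n : ℕ, q ^ (n + 1) / (1 - q ^ (n + 1)))) :=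
    (summable_pow_succ_div_one_sub_pow_succ hq0 hq1).hasSum.tendsto_sum_nat.congr
      fun m => (windowSum_eq_sum_range hq0 hq1 m).symm
  simp only [hmean]
  refine (tendsto_sum_range_sub_of_monotone (fun i m m' h => ?_) (fun i m => ?_)
    (summable_pow_succ_div_one_sub hq0 hq1) hwindow).const_add k
  · exact sub_le_sub_left (tailProd_le_tailProd hq0 hq1.le (by omega)) 1
  · rw [abs_of_nonneg (sub_nonneg.2 (tailProd_le_one hq0 hq1.le _ _))]
    exact one_sub_tailProd_le hq0 hq1 _ _

end Convergence

/-- `lim_{d→∞} ∑_{i=0}^{d} (k + i) · 2^{−i} · ∏_{j=i+1}^{d} (1 − 2^{−j}) = k + c₀`: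
the limiting expected number of received symbols needed to decode a random binary
linear code equals `k + c₀`. -/
theorem mean_decoding_time_limit (k : ℕ) :
    Tendsto
      (fun d : ℕ => ∑ i ∈ Finset.range (d + 1),
        ((k : ℝ) + (i : ℝ)) * (2 : ℝ) ^ (-(i : ℤ)) *
          ∏ j ∈ Finset.Icc (i + 1) d, (1 - (2 : ℝ) ^ (-(j : ℤ))))
      atTop (nhds ((k : ℝ) + c₀)) := by
  have hpow (j : ℕ) : (2 : ℝ) ^ (-(j : ℤ)) = 2⁻¹ ^ j := by
    rw [zpow_neg, zpow_natCast, inv_pow]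
  have hc₀ : c₀ = ∑' n : ℕ, (2⁻¹ : ℝ) ^ (n + 1) / (1 - 2⁻¹ ^ (n + 1)) := by
    refine tsum_congr fun n => ?_
    have : (2 : ℝ) ^ (n + 1) - 1 ≠ 0 := (sub_pos.2 (one_lt_pow₀ one_lt_two n.succ_ne_zero)).ne'
    rw [inv_pow]
    field_simp
  simp only [hpow, hc₀]
  exact tendsto_sum_mul_pow_mul_tailProd (by norm_num) (by norm_num) k
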